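/- arXiv:2105.00208 — 2 statements merged into one kernel-verified Lean document; each statement's English description precedes it below -/
import Mathlib

section
/- Evasion characterizes existence of a conflict-free trace: for any lifeline l and interaction term i, the inductive evasion predicate i ↓w l holds if and only if there exists a trace t ∈ σ_d(i) such that ¬(t ⋈ l). -/
universe u v
variable {A : Type u} {L : Type v}

/-- Trace `t` has a conflict with lifeline `l`: it contains an action occurring on `l`. -/
def Conflict (θ : A → L) (t : List A) (l : L) : Prop := ∃ a ∈ t, θ a = l

/-- `Interl t1 t2 t` : `t` is an interleaving of traces `t1` and `t2`. -/
inductive Interl : List A → List A → List A → Prop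
  | nil_left (t : List A) : Interl [] t t
  | nil_right (t : List A) : Interl t [] t
  | cons_left (a : A) {t1 t2 t : List A} : Interl t1 t2 t → Interl (a :: t1) t2 (a :: t)
  | cons_right (a : A) {t1 t2 t : List A} : Interl t1 t2 t → Interl t1 (a :: t2) (a :: t)

/-- `WeakSeq θ t1 t2 t` : `t` is a weak sequencing of `t1` and `t2`. -/
inductive WeakSeq (θ : A → L) : List A → List A → List A → Prop
  | nil_left (t : List A) : WeakSeq θ [] t t
  | nil_right (t : List A) : WeakSeq θ t [] t
  | cons_left (a : A) {t1 t2 t : List A} : WeakSeq θ t1 t2 t → WeakSeq θ (a :: t1) t2 (a :: t)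
  | cons_right (a : A) {t1 t2 t : List A} : WeakSeq θ t1 t2 t → ¬ Conflict θ t1 (θ a) →
      WeakSeq θ t1 (a :: t2) (a :: t)

/-- Interleaving of sets of traces. -/
def interlS (T1 T2 : Set (List A)) : Set (List A) :=
  {t | ∃ t1 ∈ T1, ∃ t2 ∈ T2, Interl t1 t2 t}

/-- Weak sequencing of sets of traces. -/
def weakS (θ : A → L) (T1 T2 : Set (List A)) : Set (List A) :=
  {t | ∃ t1 ∈ T1, ∃ t2 ∈ T2, WeakSeq θ t1 t2 t}

/-- Strict sequencing (concatenation) of sets of traces. -/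
def concatS (T1 T2 : Set (List A)) : Set (List A) :=
  {t | ∃ t1 ∈ T1, ∃ t2 ∈ T2, t = t1 ++ t2}

/-- Restricted version of a scheduling operator: the first action must come from the left. -/
def restr (op : Set (List A) → Set (List A) → Set (List A)) (T1 T2 : Set (List A)) :
    Set (List A) :=
  {t | t ∈ op T1 T2 ∧ ∀ a t', t = a :: t' → ∃ t1, a :: t1 ∈ T1 ∧ t ∈ op {t1} T2}

/-- Powers of a set of traces w.r.t. a scheduling operator. -/
def power (op : Set (List A) → Set (List A) → Set (List A)) (T : Set (List A)) :
    ℕ → Set (List A)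
  | 0 => {[]}
  | n + 1 => op T (power op T n)

/-- Kleene closure of a set of traces w.r.t. a scheduling operator. -/
def kleene (op : Set (List A) → Set (List A) → Set (List A)) (T : Set (List A)) :
    Set (List A) :=
  ⋃ n, power op T n

/-- Interaction terms. -/
inductive Interaction (A : Type u) : Type u
  | empty : Interaction A
  | act : A → Interaction A
  | strict : Interaction A → Interaction A → Interaction A
  | seq : Interaction A → Interaction A → Interaction A
  | par : Interaction A → Interaction A → Interaction A
  | alt : Interaction A → Interaction A → Interaction A
  | loopX : Interaction A → Interaction A
  | loopH : Interaction A → Interaction A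
  | loopS : Interaction A → Interaction A
  | loopP : Interaction A → Interaction A

/-- Denotational semantics of interactions. -/
def sem (θ : A → L) : Interaction A → Set (List A)
  | .empty => {[]}
  | .act a => {[a]}
  | .strict i1 i2 => concatS (sem θ i1) (sem θ i2)
  | .seq i1 i2 => weakS θ (sem θ i1) (sem θ i2)
  | .par i1 i2 => interlS (sem θ i1) (sem θ i2)
  | .alt i1 i2 => sem θ i1 ∪ sem θ i2
  | .loopX i1 => kleene concatS (sem θ i1)
  | .loopH i1 => kleene (restr (weakS θ)) (sem θ i1)
  | .loopS i1 => kleene (weakS θ) (sem θ i1)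
  | .loopP i1 => kleene interlS (sem θ i1)

/-- Termination predicate `i ↓`. -/
inductive Terminates : Interaction A → Prop
  | empty : Terminates .empty
  | alt_left {i1 i2 : Interaction A} : Terminates i1 → Terminates (.alt i1 i2)
  | alt_right {i1 i2 : Interaction A} : Terminates i2 → Terminates (.alt i1 i2)
  | strict {i1 i2 : Interaction A} : Terminates i1 → Terminates i2 → Terminates (.strict i1 i2)
  | seq {i1 i2 : Interaction A} : Terminates i1 → Terminates i2 → Terminates (.seq i1 i2)
  | par {i1 i2 : Interaction A} : Terminates i1 → Terminates i2 → Terminates (.par i1 i2)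
  | loopX (i1 : Interaction A) : Terminates (.loopX i1)
  | loopH (i1 : Interaction A) : Terminates (.loopH i1)
  | loopS (i1 : Interaction A) : Terminates (.loopS i1)
  | loopP (i1 : Interaction A) : Terminates (.loopP i1)

/-- Evasion predicate `i ↓w l`. -/
inductive Evades (θ : A → L) : Interaction A → L → Prop
  | empty (l : L) : Evades θ .empty l
  | act {a : A} {l : L} : θ a ≠ l → Evades θ (.act a) l
  | alt_left {i1 i2 : Interaction A} {l : L} : Evades θ i1 l → Evades θ (.alt i1 i2) l
  | alt_right {i1 i2 : Interaction A} {l : L} : Evades θ i2 l → Evades θ (.alt i1 i2) l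
  | strict {i1 i2 : Interaction A} {l : L} :
      Evades θ i1 l → Evades θ i2 l → Evades θ (.strict i1 i2) l
  | seq {i1 i2 : Interaction A} {l : L} :
      Evades θ i1 l → Evades θ i2 l → Evades θ (.seq i1 i2) l
  | par {i1 i2 : Interaction A} {l : L} :
      Evades θ i1 l → Evades θ i2 l → Evades θ (.par i1 i2) l
  | loopX (i1 : Interaction A) (l : L) : Evades θ (.loopX i1) l
  | loopH (i1 : Interaction A) (l : L) : Evades θ (.loopH i1) l
  | loopS (i1 : Interaction A) (l : L) : Evades θ (.loopS i1) l
  | loopP (i1 : Interaction A) (l : L) : Evades θ (.loopP i1) l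

/-- Pruning relation `i ⇝_l i'`. -/
inductive Prune (θ : A → L) (l : L) : Interaction A → Interaction A → Prop
  | empty : Prune θ l .empty .empty
  | act {a : A} : θ a ≠ l → Prune θ l (.act a) (.act a)
  | strict {i1 i2 i1' i2' : Interaction A} :
      Prune θ l i1 i1' → Prune θ l i2 i2' → Prune θ l (.strict i1 i2) (.strict i1' i2')
  | seq {i1 i2 i1' i2' : Interaction A} :
      Prune θ l i1 i1' → Prune θ l i2 i2' → Prune θ l (.seq i1 i2) (.seq i1' i2')
  | par {i1 i2 i1' i2' : Interaction A} :
      Prune θ l i1 i1' → Prune θ l i2 i2' → Prune θ l (.par i1 i2) (.par i1' i2')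
  | alt_both {i1 i2 i1' i2' : Interaction A} :
      Prune θ l i1 i1' → Prune θ l i2 i2' → Prune θ l (.alt i1 i2) (.alt i1' i2')
  | alt_left {i1 i2 i1' : Interaction A} :
      Prune θ l i1 i1' → ¬ Evades θ i2 l → Prune θ l (.alt i1 i2) i1'
  | alt_right {i1 i2 i2' : Interaction A} :
      Prune θ l i2 i2' → ¬ Evades θ i1 l → Prune θ l (.alt i1 i2) i2'
  | loopX {i1 i1' : Interaction A} : Prune θ l i1 i1' → Prune θ l (.loopX i1) (.loopX i1')
  | loopH {i1 i1' : Interaction A} : Prune θ l i1 i1' → Prune θ l (.loopH i1) (.loopH i1')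
  | loopS {i1 i1' : Interaction A} : Prune θ l i1 i1' → Prune θ l (.loopS i1) (.loopS i1')
  | loopP {i1 i1' : Interaction A} : Prune θ l i1 i1' → Prune θ l (.loopP i1) (.loopP i1')
  | loopX_elim {i1 : Interaction A} : ¬ Evades θ i1 l → Prune θ l (.loopX i1) .empty
  | loopH_elim {i1 : Interaction A} : ¬ Evades θ i1 l → Prune θ l (.loopH i1) .empty
  | loopS_elim {i1 : Interaction A} : ¬ Evades θ i1 l → Prune θ l (.loopS i1) .empty
  | loopP_elim {i1 : Interaction A} : ¬ Evades θ i1 l → Prune θ l (.loopP i1) .empty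

/-- Execution relation `i →a i'`. -/
inductive Exec (θ : A → L) : Interaction A → A → Interaction A → Prop
  | act (a : A) : Exec θ (.act a) a .empty
  | alt_left {i1 i2 i1' : Interaction A} {a : A} :
      Exec θ i1 a i1' → Exec θ (.alt i1 i2) a i1'
  | alt_right {i1 i2 i2' : Interaction A} {a : A} :
      Exec θ i2 a i2' → Exec θ (.alt i1 i2) a i2'
  | par_left {i1 i2 i1' : Interaction A} {a : A} :
      Exec θ i1 a i1' → Exec θ (.par i1 i2) a (.par i1' i2)
  | par_right {i1 i2 i2' : Interaction A} {a : A} :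
      Exec θ i2 a i2' → Exec θ (.par i1 i2) a (.par i1 i2')
  | strict_left {i1 i2 i1' : Interaction A} {a : A} :
      Exec θ i1 a i1' → Exec θ (.strict i1 i2) a (.strict i1' i2)
  | strict_right {i1 i2 i2' : Interaction A} {a : A} :
      Exec θ i2 a i2' → Terminates i1 → Exec θ (.strict i1 i2) a i2'
  | seq_left {i1 i2 i1' : Interaction A} {a : A} :
      Exec θ i1 a i1' → Exec θ (.seq i1 i2) a (.seq i1' i2)
  | seq_right {i1 i2 i1' i2' : Interaction A} {a : A} :
      Prune θ (θ a) i1 i1' → Exec θ i2 a i2' → Exec θ (.seq i1 i2) a (.seq i1' i2')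
  | loopX {i1 i1' : Interaction A} {a : A} :
      Exec θ i1 a i1' → Exec θ (.loopX i1) a (.strict i1' (.loopX i1))
  | loopH {i1 i1' : Interaction A} {a : A} :
      Exec θ i1 a i1' → Exec θ (.loopH i1) a (.seq i1' (.loopH i1))
  | loopS {i1 i1' i' : Interaction A} {a : A} :
      Exec θ i1 a i1' → Prune θ (θ a) (.loopS i1) i' →
      Exec θ (.loopS i1) a (.seq i' (.seq i1' (.loopS i1)))
  | loopP {i1 i1' : Interaction A} {a : A} :
      Exec θ i1 a i1' → Exec θ (.loopP i1) a (.par i1' (.loopP i1))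

/-- Operational semantics `σ_o`. -/
inductive SemO (θ : A → L) : Interaction A → List A → Prop
  | empty {i : Interaction A} : Terminates i → SemO θ i []
  | step {i i' : Interaction A} {a : A} {t : List A} :
      Exec θ i a i' → SemO θ i' t → SemO θ i (a :: t)

/-! Both directions are structural inductions on the term. Every loop denotes a set containing the
empty trace, and a weak sequencing or interleaving of `t1` and `t2` is a permutation of `t1 ++ t2`,
so it conflicts with `l` exactly when `t1` or `t2` does. -/

section Traces

variable {θ : A → L} {l : L} {t t1 t2 : List A}

theorem conflict_iff_mem_map : Conflict θ t l ↔ l ∈ t.map θ := by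
  simp [Conflict]

theorem not_conflict_nil : ¬ Conflict θ [] l := by
  simp [Conflict]

theorem conflict_singleton {a : A} : Conflict θ [a] l ↔ θ a = l := by
  simp [Conflict]

theorem conflict_append : Conflict θ (t1 ++ t2) l ↔ Conflict θ t1 l ∨ Conflict θ t2 l := by
  simp only [conflict_iff_mem_map, List.map_append, List.mem_append]

theorem not_conflict_append (h1 : ¬ Conflict θ t1 l) (h2 : ¬ Conflict θ t2 l) :
    ¬ Conflict θ (t1 ++ t2) l :=
  conflict_append.not.mpr (not_or.mpr ⟨h1, h2⟩)

theorem List.Perm.conflict_iff {t' : List A} (h : t.Perm t') :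
    Conflict θ t l ↔ Conflict θ t' l := by
  simp only [conflict_iff_mem_map, (h.map θ).mem_iff]

theorem Interl.perm (h : Interl t1 t2 t) : (t1 ++ t2).Perm t := by
  induction h with
  | nil_left => rfl
  | nil_right => simp
  | cons_left a _ ih => exact ih.cons a
  | cons_right a _ ih => exact List.perm_middle.trans (ih.cons a)

theorem WeakSeq.interl (h : WeakSeq θ t1 t2 t) : Interl t1 t2 t := by
  induction h with
  | nil_left => exact .nil_left _
  | nil_right => exact .nil_right _
  | cons_left a _ ih => exact ih.cons_left a
  | cons_right a _ _ ih => exact ih.cons_right a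

theorem Interl.conflict_iff (h : Interl t1 t2 t) :
    Conflict θ t l ↔ Conflict θ t1 l ∨ Conflict θ t2 l :=
  h.perm.conflict_iff.symm.trans conflict_append

theorem interl_append (t1 t2 : List A) : Interl t1 t2 (t1 ++ t2) := by
  induction t1 with
  | nil => exact .nil_left t2
  | cons a _ ih => exact ih.cons_left a

theorem weakSeq_append (θ : A → L) (t1 t2 : List A) : WeakSeq θ t1 t2 (t1 ++ t2) := by
  induction t1 with
  | nil => exact .nil_left t2
  | cons a _ ih => exact ih.cons_left a

theorem nil_mem_kleene (op : Set (List A) → Set (List A) → Set (List A)) (T : Set (List A)) :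
    [] ∈ kleene op T :=
  Set.mem_iUnion.mpr ⟨0, rfl⟩

end Traces

theorem Evades.exists_conflict_free {θ : A → L} {l : L} {i : Interaction A}
    (h : Evades θ i l) : ∃ t ∈ sem θ i, ¬ Conflict θ t l := by
  induction h with
  | empty => exact ⟨[], rfl, not_conflict_nil⟩
  | @act a _ ha => exact ⟨[a], rfl, conflict_singleton.not.mpr ha⟩
  | alt_left _ ih =>
    obtain ⟨t, ht, hc⟩ := ih
    exact ⟨t, .inl ht, hc⟩
  | alt_right _ ih =>
    obtain ⟨t, ht, hc⟩ := ih
    exact ⟨t, .inr ht, hc⟩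
  | strict _ _ ih1 ih2 =>
    obtain ⟨t1, ht1, hc1⟩ := ih1
    obtain ⟨t2, ht2, hc2⟩ := ih2
    exact ⟨t1 ++ t2, ⟨t1, ht1, t2, ht2, rfl⟩,
      not_conflict_append hc1 hc2⟩
  | seq _ _ ih1 ih2 =>
    obtain ⟨t1, ht1, hc1⟩ := ih1
    obtain ⟨t2, ht2, hc2⟩ := ih2
    exact ⟨t1 ++ t2, ⟨t1, ht1, t2, ht2, weakSeq_append θ t1 t2⟩,
      not_conflict_append hc1 hc2⟩
  | par _ _ ih1 ih2 =>
    obtain ⟨t1, ht1, hc1⟩ := ih1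
    obtain ⟨t2, ht2, hc2⟩ := ih2
    exact ⟨t1 ++ t2, ⟨t1, ht1, t2, ht2, interl_append t1 t2⟩,
      not_conflict_append hc1 hc2⟩
  | loopX | loopH | loopS | loopP => exact ⟨[], nil_mem_kleene _ _, not_conflict_nil⟩

theorem evades_of_mem_sem {θ : A → L} {l : L} {i : Interaction A} {t : List A}
    (ht : t ∈ sem θ i) (hc : ¬ Conflict θ t l) : Evades θ i l := by
  induction i generalizing t with
  | empty => exact .empty l
  | act a =>
    subst ht
    exact .act (conflict_singleton.not.mp hc)
  | strict _ _ ih1 ih2 =>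
    obtain ⟨t1, ht1, t2, ht2, rfl⟩ := ht
    rw [conflict_append, not_or] at hc
    exact .strict (ih1 ht1 hc.1) (ih2 ht2 hc.2)
  | seq _ _ ih1 ih2 =>
    obtain ⟨t1, ht1, t2, ht2, hw⟩ := ht
    rw [hw.interl.conflict_iff, not_or] at hc
    exact .seq (ih1 ht1 hc.1) (ih2 ht2 hc.2)
  | par _ _ ih1 ih2 =>
    obtain ⟨t1, ht1, t2, ht2, hi⟩ := ht
    rw [hi.conflict_iff, not_or] at hc
    exact .par (ih1 ht1 hc.1) (ih2 ht2 hc.2)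
  | alt _ _ ih1 ih2 =>
    rcases ht with ht | ht
    · exact .alt_left (ih1 ht hc)
    · exact .alt_right (ih2 ht hc)
  | loopX i1 => exact .loopX i1 l
  | loopH i1 => exact .loopH i1 l
  | loopS i1 => exact .loopS i1 l
  | loopP i1 => exact .loopP i1 l

theorem evades_iff_exists_conflict_free {A : Type u} {L : Type v} (θ : A → L)
    (l : L) (i : Interaction A) :
    Evades θ i l ↔ ∃ t ∈ sem θ i, ¬ Conflict θ t l :=
  ⟨Evades.exists_conflict_free, fun ⟨_, ht, hc⟩ => evades_of_mem_sem ht hc⟩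
end

section
/- Evasion is equivalent to existence and uniqueness of a pruned term: for any interaction term i and lifeline l, i ↓w l holds if and only if there exists a unique interaction i' such that the pruning relation i ⇝_l i' holds. -/
universe u v
variable {A : Type u} {L : Type v}

/-! The congruence rules of `⇝_l` require the pruned subterms to evade `l`, while the rules that
discard an `alt` branch or a loop require the discarded part not to evade `l`. These side
conditions are complementary, so a pruning can be built exactly when the term evades `l`, and at
each node only one rule can fire. -/

theorem Prune.evades {θ : A → L} {l : L} {i j : Interaction A} (h : Prune θ l i j) :
    Evades θ i l := by
  induction h <;> grind [Evades]

theorem Prune.unique {θ : A → L} {l : L} {i j₁ j₂ : Interaction A}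
    (h₁ : Prune θ l i j₁) (h₂ : Prune θ l i j₂) : j₁ = j₂ := by
  -- Two different rules at the same node would make some subterm both evade `l` and not.
  induction h₁ generalizing j₂ <;> cases h₂ <;> grind [Prune.evades]

theorem exists_prune_of_evades {θ : A → L} {l : L} {i : Interaction A} :
    Evades θ i l → ∃ j, Prune θ l i j := by
  induction i with
  | empty => exact fun _ => ⟨_, .empty⟩
  | act a => intro h; cases h with | act h => exact ⟨_, .act h⟩
  | strict i1 i2 ih1 ih2 | seq i1 i2 ih1 ih2 | par i1 i2 ih1 ih2 =>
    intro h
    cases h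
    obtain ⟨⟨j1, p1⟩, ⟨j2, p2⟩⟩ := And.intro (ih1 ‹_›) (ih2 ‹_›)
    exact ⟨_, by constructor <;> assumption⟩
  | alt i1 i2 ih1 ih2 =>
    intro h
    by_cases h1 : Evades θ i1 l <;> by_cases h2 : Evades θ i2 l
    · obtain ⟨⟨j1, p1⟩, ⟨j2, p2⟩⟩ := And.intro (ih1 h1) (ih2 h2)
      exact ⟨_, .alt_both p1 p2⟩
    · obtain ⟨j1, p1⟩ := ih1 h1
      exact ⟨_, .alt_left p1 h2⟩
    · obtain ⟨j2, p2⟩ := ih2 h2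
      exact ⟨_, .alt_right p2 h1⟩
    · cases h <;> contradiction
  | loopX i1 ih | loopH i1 ih | loopS i1 ih | loopP i1 ih =>
    intro
    by_cases h1 : Evades θ i1 l
    · obtain ⟨j, p⟩ := ih h1
      exact ⟨_, by constructor; exact p⟩
    · exact ⟨.empty, by constructor; exact h1⟩

theorem evades_iff_unique_prune {A : Type u} {L : Type v} (θ : A → L)
    (i : Interaction A) (l : L) :
    Evades θ i l ↔ ∃! i' : Interaction A, Prune θ l i i' :=
  ⟨fun h => existsUnique_of_exists_of_unique (exists_prune_of_evades h) fun _ _ => Prune.unique,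
    fun ⟨_, hp, _⟩ => hp.evades⟩
end
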